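/- Let ζ be a complex number with |ζ| = 1. The quantity |1/4 + (-1)ᵏ/4 + (1/2)ζᵏ| equals 1/2 for all k ∈ {1,2,3,4,5} if and only if ζ is a primitive cube root or a primitive sixth root of unity. -/

import Mathlib

/-!
For odd `k` the expression is `ζᵏ / 2`, of norm `1 / 2`. For even `k` it is `(1 + ζᵏ) / 2`,
and for a unit complex number `w` one has `|1 + w| = 1` iff `w² + w + 1 = 0`, i.e. iff `w` is a
primitive cube root of unity. So the condition says that `ζ²` (and then also `ζ⁴ = (ζ²)²`) is a
primitive cube root of unity, and `Φ₃(X²) = Φ₆(X) Φ₃(X)` turns this into `ζ` being a primitive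
cube or sixth root of unity.
-/

open Complex

open Polynomial in
theorem IsPrimitiveRoot.pow_prime_iff {K : Type*} [CommRing K] [IsDomain K] [CharZero K]
    {p n : ℕ} (hp : p.Prime) (hpn : ¬p ∣ n) (hn : 0 < n) (ζ : K) :
    IsPrimitiveRoot (ζ ^ p) n ↔ IsPrimitiveRoot ζ (n * p) ∨ IsPrimitiveRoot ζ n := by
  simp only [← isRoot_cyclotomic_iff_charZero hn, ← isRoot_cyclotomic_iff_charZero
    (Nat.mul_pos hn hp.pos), IsRoot.def, ← expand_eval,
    cyclotomic_expand_eq_cyclotomic_mul hp hpn, eval_mul, mul_eq_zero]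

theorem norm_one_add_eq_one_iff {w : ℂ} (hw : ‖w‖ = 1) :
    ‖1 + w‖ = 1 ↔ IsPrimitiveRoot w 3 := by
  have hw0 : w ≠ 0 := norm_ne_zero_iff.mp (by rw [hw]; exact one_ne_zero)
  have hconj : (starRingEnd ℂ) w = w⁻¹ := (inv_eq_conj hw).symm
  rw [← Polynomial.isRoot_cyclotomic_iff_charZero three_pos, Polynomial.cyclotomic_three]
  simp only [Polynomial.IsRoot.def, Polynomial.eval_add, Polynomial.eval_pow,
    Polynomial.eval_X, Polynomial.eval_one]
  calc ‖1 + w‖ = 1 ↔ (normSq (1 + w) : ℂ) = 1 := by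
        rw [← Complex.sq_norm, ← pow_eq_one_iff_of_nonneg (norm_nonneg _) two_ne_zero]
        norm_cast
    _ ↔ (1 + w) * (1 + w⁻¹) = 1 := by rw [← mul_conj, map_add, map_one, hconj]
    _ ↔ w ^ 2 + w + 1 = 0 := by
        rw [← mul_left_inj' hw0]
        constructor <;> intro h <;> field_simp at h ⊢ <;> linear_combination h

theorem norm_quarter_add_neg_one_pow_add_half_pow_eq_half_iff {w : ℂ} (hw : ‖w‖ = 1) (k : ℕ) :
    ‖(1 / 4 : ℂ) + (-1 : ℂ) ^ k / 4 + w ^ k / 2‖ = 1 / 2 ↔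
      (Even k → IsPrimitiveRoot (w ^ k) 3) := by
  have hwk : ‖w ^ k‖ = 1 := by rw [norm_pow, hw, one_pow]
  rcases Nat.even_or_odd k with heven | hodd
  · have he : (1 / 4 : ℂ) + (-1 : ℂ) ^ k / 4 + w ^ k / 2 = (1 + w ^ k) / 2 := by
      rw [heven.neg_one_pow]; ring
    rw [he, norm_div, RCLike.norm_ofNat, ← norm_one_add_eq_one_iff hwk,
      div_left_inj' two_ne_zero]
    exact (imp_iff_right heven).symm
  · have he : (1 / 4 : ℂ) + (-1 : ℂ) ^ k / 4 + w ^ k / 2 = w ^ k / 2 := by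
      rw [hodd.neg_one_pow]; ring
    rw [he, norm_div, hwk]
    simp [Nat.not_even_iff_odd.mpr hodd]

theorem stmt18 (ζ : ℂ) (hζ : ‖ζ‖ = 1) :
    (∀ k : ℕ, 1 ≤ k → k ≤ 5 →
        ‖(1 / 4 : ℂ) + (-1 : ℂ) ^ k / 4 + ζ ^ k / 2‖ = 1 / 2) ↔
      ((ζ ^ 3 = 1 ∧ ∀ m : ℕ, 0 < m → m < 3 → ζ ^ m ≠ 1) ∨
        (ζ ^ 6 = 1 ∧ ∀ m : ℕ, 0 < m → m < 6 → ζ ^ m ≠ 1)) := by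
  simp only [norm_quarter_add_neg_one_pow_add_half_pow_eq_half_iff hζ,
    ← IsPrimitiveRoot.iff (by norm_num : 0 < 3), ← IsPrimitiveRoot.iff (by norm_num : 0 < 6)]
  rw [or_comm, ← IsPrimitiveRoot.pow_prime_iff (n := 3) Nat.prime_two (by norm_num) three_pos]
  refine ⟨fun h ↦ h 2 (by norm_num) (by norm_num) even_two, fun h k hk1 hk5 ⟨j, hj⟩ ↦ ?_⟩
  rw [hj, ← two_mul, pow_mul]
  obtain rfl | rfl : j = 1 ∨ j = 2 := by omega
  all_goals exact h.pow_of_coprime _ (by norm_num)
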